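/- arXiv:1910.03079 — 9 statements merged into one kernel-verified Lean document; each statement's English description precedes it below -/
import Mathlib

section
/- Let p and q be distinct odd primes. Then the number of natural numbers n which cannot be expressed in the form n = px + qy for non-negative integers x and y is equal to (p-1)(q-1)/2. -/
/-!
Write `F = pq - p - q`. Coprimality gives every integer a unique form `n = pa + qb` with
`0 ≤ a < q`, and `n ≥ 0` is representable exactly when `b ≥ 0`. Since `F = p(q-1) + q(-1)`,
the form of `F - n` is `p(q-1-a) + q(-1-b)`, so `n ↦ F - n` swaps representable and
non-representable numbers in `[0, F]`. Every number above `F` is representable, hence exactly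
half of the `F + 1 = (p-1)(q-1)` numbers in `[0, F]` are not.
-/

open Finset

def Representable (p q n : ℕ) : Prop := ∃ x y : ℕ, n = p * x + q * y

theorem Nat.card_subtype_not_eq_half_of_swap (P : ℕ → Prop) (F : ℕ)
    (h_above : ∀ n, F < n → P n) (h_swap : ∀ n ≤ F, P (F - n) ↔ ¬ P n) :
    Nat.card {n // ¬ P n} = (F + 1) / 2 := by
  classical
  set S := (range (F + 1)).filter (fun n => ¬ P n)
  set T := (range (F + 1)).filter P
  have hS : {n | ¬ P n} = (S : Set ℕ) := by
    ext n
    simp only [Set.mem_ofPred_eq, S, coe_filter, mem_range]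
    exact ⟨fun h => ⟨by by_contra! hn; exact h (h_above n hn), h⟩, And.right⟩
  have hST : #S = #T := by
    refine card_nbij' (F - ·) (F - ·) ?_ ?_ ?_ ?_ <;>
      intro n hn <;> simp only [S, T, coe_filter, mem_range, Set.mem_ofPred_eq] at hn ⊢
    · exact ⟨by omega, by rw [h_swap n (by omega)]; exact hn.2⟩
    · refine ⟨by omega, ?_⟩
      rw [← h_swap (F - n) (by omega), Nat.sub_sub_self (by omega)]
      exact hn.2
    all_goals omega
  have hsum : #T + #S = F + 1 := by
    rw [card_filter_add_card_filter_not, card_range]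
  change Nat.card {n | ¬ P n} = _
  rw [hS, Nat.card_coe_set_eq, Set.ncard_coe_finset]
  omega

namespace Representable

variable {p q : ℕ}

theorem iff_mem_closure {n : ℕ} :
    Representable p q n ↔ n ∈ AddSubmonoid.closure ({p, q} : Set ℕ) := by
  simp only [Representable, AddSubmonoid.mem_closure_pair, smul_eq_mul]
  exact ⟨fun ⟨x, y, h⟩ => ⟨x, y, by rw [h]; ring⟩,
    fun ⟨x, y, h⟩ => ⟨x, y, by rw [← h]; ring⟩⟩

theorem of_frobeniusNumber_lt (hpq : p.Coprime q) (hp : 1 < p) (hq : 1 < q) {n : ℕ}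
    (hn : p * q - p - q < n) : Representable p q n := by
  by_contra h
  exact hn.not_ge ((frobeniusNumber_pair hpq hp hq).2 (mt iff_mem_closure.mpr h))

theorem exists_eq_mul_add_mul (hpq : p.Coprime q) (hq : 0 < q) (n : ℤ) :
    ∃ a b : ℤ, 0 ≤ a ∧ a < q ∧ n = p * a + q * b := by
  obtain ⟨u, v, huv⟩ := Nat.isCoprime_iff_coprime.mpr hpq
  refine ⟨n * u % q, n * v + p * (n * u / q), Int.emod_nonneg _ (by omega),
    Int.emod_lt_of_pos _ (by omega), ?_⟩
  linear_combination (-n) * huv - p * Int.emod_add_mul_ediv (n * u) q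

theorem iff_nonneg (hpq : p.Coprime q) {n : ℕ} {a b : ℤ} (ha : 0 ≤ a) (haq : a < q)
    (hn : (n : ℤ) = p * a + q * b) : Representable p q n ↔ 0 ≤ b := by
  constructor
  · rintro ⟨x, y, rfl⟩
    push_cast at hn
    have hdvd : (q : ℤ) ∣ p * (x - a) := ⟨b - y, by linear_combination hn⟩
    obtain ⟨k, hk⟩ := (Nat.isCoprime_iff_coprime.mpr hpq).symm.dvd_of_dvd_mul_left hdvd
    have hk0 : 0 ≤ k := by nlinarith
    have hby : b - y = p * k := by
      apply mul_left_cancel₀ (show (q : ℤ) ≠ 0 by omega)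
      linear_combination -hn + p * hk
    nlinarith
  · intro hb
    lift a to ℕ using ha
    lift b to ℕ using hb
    exact ⟨a, b, by exact_mod_cast hn⟩

theorem frobeniusNumber_sub_iff (hpq : p.Coprime q) (hp : 1 < p) (hq : 1 < q) {n : ℕ}
    (hn : n ≤ p * q - p - q) :
    Representable p q (p * q - p - q - n) ↔ ¬ Representable p q n := by
  obtain ⟨a, b, ha, haq, hab⟩ := exists_eq_mul_add_mul hpq (by omega) n
  have hsum : p + q ≤ p * q := Nat.add_le_mul hp hq
  have hsub : ((p * q - p - q - n : ℕ) : ℤ) = p * (q - 1 - a) + q * (-1 - b) := by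
    rw [Nat.cast_sub hn, Nat.sub_sub, Nat.cast_sub hsum]
    push_cast
    linear_combination -hab
  rw [iff_nonneg hpq ha haq hab, iff_nonneg hpq (by omega) (by omega) hsub]
  omega

theorem card_not_representable (hpq : p.Coprime q) (hp : 1 < p) (hq : 1 < q) :
    Nat.card {n // ¬ Representable p q n} = (p - 1) * (q - 1) / 2 := by
  rw [Nat.card_subtype_not_eq_half_of_swap _ _ (fun _ => of_frobeniusNumber_lt hpq hp hq)
    (fun _ => frobeniusNumber_sub_iff hpq hp hq)]
  have hsum : p + q ≤ p * q := Nat.add_le_mul hp hq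
  have hp_le : p ≤ p * q := Nat.le_mul_of_pos_right p (by omega)
  congr 1
  zify [hsum, hp_le, le_tsub_of_add_le_left hsum, hp.le, hq.le]
  ring

end Representable

theorem stmt_1_general (p q : ℕ) (hp : p.Prime) (hq : q.Prime)
    (hpq : p ≠ q) :
    Nat.card {n : ℕ // ¬ ∃ x y : ℕ, n = p * x + q * y} = (p - 1) * (q - 1) / 2 :=
  Representable.card_not_representable ((Nat.coprime_primes hp hq).mpr hpq) hp.one_lt hq.one_lt

/-- Sylvester (1882): for distinct odd primes `p` and `q`, the number of natural
numbers not expressible as `px + qy` with `x, y` non-negative integers is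
`(p-1)(q-1)/2`. -/
theorem stmt_1 (p q : ℕ) (hp : p.Prime) (hq : q.Prime) (hp2 : Odd p) (hq2 : Odd q)
    (hpq : p ≠ q) :
    Nat.card {n : ℕ // ¬ ∃ x y : ℕ, n = p * x + q * y} = (p - 1) * (q - 1) / 2 :=
  stmt_1_general p q hp hq hpq
end

section
/- Let a, b, c, n be positive integers with gcd(a,b,c) = 1. Set g1 = gcd(b,c), g2 = gcd(c,a), g3 = gcd(a,b). Let n1, n2, n3 be integers with 0 ≤ n1 < g1, 0 ≤ n2 < g2, 0 ≤ n3 < g3 satisfying a·n1 ≡ n (mod g1), b·n2 ≡ n (mod g2), c·n3 ≡ n (mod g3). Set A = a/(g2·g3), B = b/(g3·g1), C = c/(g1·g2), and N = (n − a·n1 − b·n2 − c·n3)/(g1·g2·g3) as an integer. Then the number of triples (x,y,z) of non-negative integers with ax + by + cz = n equals the number of triples (x,y,z) of non-negative integers with Ax + By + Cz = N. -/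
/-!
Since `gcd(b, c)` divides `b` and `c` and is coprime to `a`, every solution of
`ax + by + cz = n` has `x ≡ n₁ (mod gcd(b, c))`, i.e. `x = n₁ + gcd(b, c) x'`, and likewise for
`y` and `z`. Substituting, the equation becomes `g₁g₂g₃ (Ax' + By' + Cz' - N) = 0`.
-/

open Function

lemma Nat.card_subtype_eq_of_injective {α β : Type*} {P : α → Prop} {Q : β → Prop}
    {f : β → α} (hf : Injective f) (hrange : ∀ a, P a → a ∈ Set.range f)
    (hPQ : ∀ b, P (f b) ↔ Q b) :
    Nat.card {a // P a} = Nat.card {b // Q b} := by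
  refine (Nat.card_congr (Equiv.ofBijective (fun b => ⟨f b.1, (hPQ _).2 b.2⟩) ⟨?_, ?_⟩)).symm
  · exact fun b b' h => Subtype.ext (hf (congrArg Subtype.val h))
  · rintro ⟨a, ha⟩
    obtain ⟨b, rfl⟩ := hrange a ha
    exact ⟨⟨b, (hPQ b).1 ha⟩, rfl⟩

lemma Nat.gcd_gcd_rotate (a b c : ℕ) : Nat.gcd a (Nat.gcd b c) = Nat.gcd b (Nat.gcd c a) := by
  ac_rfl

lemma Nat.gcd_gcd_gcd_eq_gcd_gcd (a b c : ℕ) :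
    Nat.gcd (Nat.gcd c a) (Nat.gcd a b) = Nat.gcd a (Nat.gcd b c) := by
  rw [Nat.gcd_comm c a, Nat.gcd_assoc, Nat.gcd_left_comm c, ← Nat.gcd_assoc, Nat.gcd_self,
    Nat.gcd_comm c b]

lemma Nat.gcd_mul_gcd_dvd_of_gcd_gcd_eq_one {a b c : ℕ} (h : Nat.gcd a (Nat.gcd b c) = 1) :
    Nat.gcd c a * Nat.gcd a b ∣ a :=
  Nat.Coprime.mul_dvd_of_dvd_of_dvd ((Nat.gcd_gcd_gcd_eq_gcd_gcd a b c).trans h)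
    (Nat.gcd_dvd_right c a) (Nat.gcd_dvd_left a b)

lemma Nat.exists_eq_add_mul_of_mul_add_eq {p s m n x g : ℕ} (hcop : Nat.Coprime p g)
    (hs : g ∣ s) (hm : p * m ≡ n [MOD g]) (hmg : m < g) (heq : p * x + s = n) :
    ∃ k, x = m + g * k := by
  have hx : x ≡ m [MOD g] := by
    refine Nat.ModEq.cancel_left_of_coprime hcop.symm ?_
    calc p * x ≡ p * x + s [MOD g] := by
          simpa using ((Nat.modEq_zero_iff_dvd.2 hs).add_left (p * x)).symm
      _ = n := heq
      _ ≡ p * m [MOD g] := hm.symm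
  have hxm : x % g = m := Eq.trans hx (Nat.mod_eq_of_lt hmg)
  exact ⟨x / g, by rw [← hxm, Nat.mod_add_div]⟩

lemma Nat.exists_eq_add_gcd_mul {a b c n m x y z : ℕ} (h : Nat.gcd a (Nat.gcd b c) = 1)
    (hm : a * m ≡ n [MOD Nat.gcd b c]) (hmg : m < Nat.gcd b c)
    (heq : a * x + b * y + c * z = n) : ∃ k, x = m + Nat.gcd b c * k :=
  Nat.exists_eq_add_mul_of_mul_add_eq h
    (((Nat.gcd_dvd_left b c).mul_right y).add ((Nat.gcd_dvd_right b c).mul_right z)) hm hmg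
    (by rw [← heq, add_assoc])

lemma linear_eq_iff_reduced_eq {R : Type*} [CommRing R] [NoZeroDivisors R]
    {a b c n g₁ g₂ g₃ n₁ n₂ n₃ A B C N : R} (hg : g₁ * g₂ * g₃ ≠ 0)
    (ha : a = g₂ * g₃ * A) (hb : b = g₃ * g₁ * B) (hc : c = g₁ * g₂ * C)
    (hN : g₁ * g₂ * g₃ * N = n - a * n₁ - b * n₂ - c * n₃) (x y z : R) :
    a * (n₁ + g₁ * x) + b * (n₂ + g₂ * y) + c * (n₃ + g₃ * z) = n ↔ A * x + B * y + C * z = N := by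
  have key : a * (n₁ + g₁ * x) + b * (n₂ + g₂ * y) + c * (n₃ + g₃ * z) - n
      = g₁ * g₂ * g₃ * (A * x + B * y + C * z - N) := by
    subst ha hb hc
    linear_combination hN
  rw [← sub_eq_zero, key, mul_eq_zero, sub_eq_zero, or_iff_right hg]

theorem stmt_2_general (a b c n : ℕ)
    (hgcd : Nat.gcd a (Nat.gcd b c) = 1)
    (n1 n2 n3 : ℕ)
    (hn1 : n1 < Nat.gcd b c) (hn2 : n2 < Nat.gcd c a) (hn3 : n3 < Nat.gcd a b)
    (hcong1 : a * n1 ≡ n [MOD Nat.gcd b c])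
    (hcong2 : b * n2 ≡ n [MOD Nat.gcd c a])
    (hcong3 : c * n3 ≡ n [MOD Nat.gcd a b])
    (A B C : ℕ) (N : ℤ)
    (hA : A = a / (Nat.gcd c a * Nat.gcd a b))
    (hB : B = b / (Nat.gcd a b * Nat.gcd b c))
    (hC : C = c / (Nat.gcd b c * Nat.gcd c a))
    (hN : (Nat.gcd b c * Nat.gcd c a * Nat.gcd a b : ℤ) * N
        = (n : ℤ) - a * n1 - b * n2 - c * n3) :
    Nat.card {t : ℕ × ℕ × ℕ // a * t.1 + b * t.2.1 + c * t.2.2 = n}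
      = Nat.card {t : ℕ × ℕ × ℕ // (A : ℤ) * t.1 + B * t.2.1 + C * t.2.2 = N} := by
  have hgcd₂ : Nat.gcd b (Nat.gcd c a) = 1 := by rwa [← Nat.gcd_gcd_rotate]
  have hgcd₃ : Nat.gcd c (Nat.gcd a b) = 1 := by rwa [← Nat.gcd_gcd_rotate]
  have haA : a = Nat.gcd c a * Nat.gcd a b * A :=
    hA ▸ (Nat.mul_div_cancel' (Nat.gcd_mul_gcd_dvd_of_gcd_gcd_eq_one hgcd)).symm
  have hbB : b = Nat.gcd a b * Nat.gcd b c * B :=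
    hB ▸ (Nat.mul_div_cancel' (Nat.gcd_mul_gcd_dvd_of_gcd_gcd_eq_one hgcd₂)).symm
  have hcC : c = Nat.gcd b c * Nat.gcd c a * C :=
    hC ▸ (Nat.mul_div_cancel' (Nat.gcd_mul_gcd_dvd_of_gcd_gcd_eq_one hgcd₃)).symm
  have hg : (Nat.gcd b c * Nat.gcd c a * Nat.gcd a b : ℤ) ≠ 0 := by
    simp only [ne_eq, mul_eq_zero, Nat.cast_eq_zero]
    omega
  have hshift_inj : ∀ {m g : ℕ}, m < g → Injective (fun k => m + g * k) := fun hmg =>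
    (add_right_injective _).comp (mul_right_injective₀ (Nat.zero_lt_of_lt hmg).ne')
  refine Nat.card_subtype_eq_of_injective
    ((hshift_inj hn1).prodMap ((hshift_inj hn2).prodMap (hshift_inj hn3))) ?_ ?_
  · rintro ⟨x, y, z⟩ heq
    dsimp only at heq
    obtain ⟨x', hx⟩ := Nat.exists_eq_add_gcd_mul hgcd hcong1 hn1 heq
    obtain ⟨y', hy⟩ := Nat.exists_eq_add_gcd_mul hgcd₂ hcong2 hn2
      (by rw [← heq]; ring : b * y + c * z + a * x = n)
    obtain ⟨z', hz⟩ := Nat.exists_eq_add_gcd_mul hgcd₃ hcong3 hn3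
      (by rw [← heq]; ring : c * z + a * x + b * y = n)
    exact ⟨(x', y', z'), by rw [hx, hy, hz]; rfl⟩
  · rintro ⟨x, y, z⟩
    rw [← linear_eq_iff_reduced_eq hg (by exact_mod_cast haA) (by exact_mod_cast hbB)
      (by exact_mod_cast hcC) hN]
    simp only [Prod.map_apply]
    norm_cast

/-- Reduction to the pairwise coprime case: the number of non-negative solutions of
`ax + by + cz = n` equals the number of non-negative solutions of `Ax + By + Cz = N`. -/
theorem stmt_2 (a b c n : ℕ) (ha : 0 < a) (hb : 0 < b) (hc : 0 < c) (hn : 0 < n)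
    (hgcd : Nat.gcd a (Nat.gcd b c) = 1)
    (n1 n2 n3 : ℕ)
    (hn1 : n1 < Nat.gcd b c) (hn2 : n2 < Nat.gcd c a) (hn3 : n3 < Nat.gcd a b)
    (hcong1 : a * n1 ≡ n [MOD Nat.gcd b c])
    (hcong2 : b * n2 ≡ n [MOD Nat.gcd c a])
    (hcong3 : c * n3 ≡ n [MOD Nat.gcd a b])
    (A B C : ℕ) (N : ℤ)
    (hA : A = a / (Nat.gcd c a * Nat.gcd a b))
    (hB : B = b / (Nat.gcd a b * Nat.gcd b c))
    (hC : C = c / (Nat.gcd b c * Nat.gcd c a))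
    (hN : (Nat.gcd b c * Nat.gcd c a * Nat.gcd a b : ℤ) * N
        = (n : ℤ) - a * n1 - b * n2 - c * n3) :
    Nat.card {t : ℕ × ℕ × ℕ // a * t.1 + b * t.2.1 + c * t.2.2 = n}
      = Nat.card {t : ℕ × ℕ × ℕ // (A : ℤ) * t.1 + B * t.2.1 + C * t.2.2 = N} :=
  stmt_2_general a b c n hgcd n1 n2 n3 hn1 hn2 hn3 hcong1 hcong2 hcong3 A B C N hA hB hC hN
end

section
/- Let a, b, c, n be positive integers with gcd(a,b,c) = 1 and let g1 = gcd(b,c), g2 = gcd(c,a), g3 = gcd(a,b). Let n1, n2, n3 be integers with 0 ≤ n1 < g1, 0 ≤ n2 < g2, 0 ≤ n3 < g3 satisfying a·n1 ≡ n (mod g1), b·n2 ≡ n (mod g2), c·n3 ≡ n (mod g3). Then g1·g2·g3 divides n − a·n1 − b·n2 − c·n3. -/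
/-
Each `gᵢ` divides the two coefficients among `a, b, c` other than the one multiplying `nᵢ`, so
modulo `gᵢ` the number `n − a·n1 − b·n2 − c·n3` is `n` minus a single term, which vanishes by
the congruence defining `nᵢ`. Since `gcd(a,b,c) = 1` the three `gᵢ` are pairwise coprime, so
their product divides it too.
-/

theorem Nat.gcd_dvd_sub_of_mul_modEq {a b c n m₁ m₂ m₃ : ℕ} (h : a * m₁ ≡ n [MOD Nat.gcd b c]) :
    (Nat.gcd b c : ℤ) ∣ n - a * m₁ - b * m₂ - c * m₃ := by
  have hm₁ : (Nat.gcd b c : ℤ) ∣ n - a * m₁ := by exact_mod_cast Nat.modEq_iff_dvd.mp h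
  have hb : (Nat.gcd b c : ℤ) ∣ b := Int.natCast_dvd_natCast.mpr (Nat.gcd_dvd_left b c)
  have hc : (Nat.gcd b c : ℤ) ∣ c := Int.natCast_dvd_natCast.mpr (Nat.gcd_dvd_right b c)
  exact (hm₁.sub (hb.mul_right _)).sub (hc.mul_right _)

theorem Nat.pairwise_coprime_gcd_of_gcd_gcd_eq_one {a b c : ℕ}
    (h : Nat.gcd a (Nat.gcd b c) = 1) :
    Nat.Coprime (Nat.gcd b c) (Nat.gcd c a) ∧ Nat.Coprime (Nat.gcd b c) (Nat.gcd a b) ∧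
      Nat.Coprime (Nat.gcd c a) (Nat.gcd a b) := by
  have ha : Nat.Coprime a (Nat.gcd b c) := h
  have hc : Nat.Coprime (Nat.gcd a b) c := by rwa [Nat.Coprime, Nat.gcd_assoc]
  refine ⟨?_, ?_, ?_⟩
  · exact (ha.coprime_dvd_left (Nat.gcd_dvd_right c a)).symm
  · exact (ha.coprime_dvd_left (Nat.gcd_dvd_left a b)).symm
  · exact (hc.coprime_dvd_right (Nat.gcd_dvd_left c a)).symm

theorem stmt_3_general (a b c n : ℕ)
    (hgcd : Nat.gcd a (Nat.gcd b c) = 1)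
    (n1 n2 n3 : ℕ)
    (hcong1 : a * n1 ≡ n [MOD Nat.gcd b c])
    (hcong2 : b * n2 ≡ n [MOD Nat.gcd c a])
    (hcong3 : c * n3 ≡ n [MOD Nat.gcd a b]) :
    (Nat.gcd b c * Nat.gcd c a * Nat.gcd a b : ℤ) ∣
      ((n : ℤ) - a * n1 - b * n2 - c * n3) := by
  obtain ⟨h12, h13, h23⟩ := Nat.pairwise_coprime_gcd_of_gcd_gcd_eq_one hgcd
  have d1 := Nat.gcd_dvd_sub_of_mul_modEq (m₂ := n2) (m₃ := n3) hcong1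
  have d2 : (Nat.gcd c a : ℤ) ∣ n - a * n1 - b * n2 - c * n3 := by
    convert Nat.gcd_dvd_sub_of_mul_modEq (m₂ := n3) (m₃ := n1) hcong2 using 1
    ring
  have d3 : (Nat.gcd a b : ℤ) ∣ n - a * n1 - b * n2 - c * n3 := by
    convert Nat.gcd_dvd_sub_of_mul_modEq (m₂ := n1) (m₃ := n2) hcong3 using 1
    ring
  rw [← Nat.isCoprime_iff_coprime] at h12 h13 h23
  exact (h13.mul_left h23).mul_dvd (h12.mul_dvd d1 d2) d3

/-- `g1·g2·g3` divides `n − a·n1 − b·n2 − c·n3`, where `g1 = gcd(b,c)`,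
`g2 = gcd(c,a)`, `g3 = gcd(a,b)`. -/
theorem stmt_3 (a b c n : ℕ) (ha : 0 < a) (hb : 0 < b) (hc : 0 < c) (hn : 0 < n)
    (hgcd : Nat.gcd a (Nat.gcd b c) = 1)
    (n1 n2 n3 : ℕ)
    (hn1 : n1 < Nat.gcd b c) (hn2 : n2 < Nat.gcd c a) (hn3 : n3 < Nat.gcd a b)
    (hcong1 : a * n1 ≡ n [MOD Nat.gcd b c])
    (hcong2 : b * n2 ≡ n [MOD Nat.gcd c a])
    (hcong3 : c * n3 ≡ n [MOD Nat.gcd a b]) :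
    (Nat.gcd b c * Nat.gcd c a * Nat.gcd a b : ℤ) ∣
      ((n : ℤ) - a * n1 - b * n2 - c * n3) :=
  stmt_3_general a b c n hgcd n1 n2 n3 hcong1 hcong2 hcong3
end

section
/- Let p and q be distinct odd primes. Let N_{p,q} denote the number of triples (x,y,z) of non-negative integers with px + qy + z = q(p−1)/2, and N_{q,p} the number of triples (x,y,z) of non-negative integers with px + qy + z = p(q−1)/2. Then the number of triples (x,y,z) of non-negative integers satisfying px + qy + z = p(q−1)/2 + q(p−1)/2 is equal to 2(N_{p,q} + N_{q,p}) − ((p+1)/2 + (q+1)/2 + 1). -/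
/-!
Write `p = 2a + 1`, `q = 2b + 1`. Dropping the slack variable `z`, each count is the number of
lattice points `(x, y)` with `px + qy ≤ N`.

For `N = pb + qa < pq` these points lie in the box `[0, q) × [0, p)`, and the reflection
`(x, y) ↦ (2b - x, 2a - y)` of the box exchanges `px + qy ≤ N` with `px + qy ≥ N`. By coprimality
`(b, a)` is the only box point on the line `px + qy = N`, so twice the count is `pq + 1`.

For `N = qa` and `N = pb`, the substitutions `y ↦ a - y` and `x ↦ b - x` turn the two counts into
the points of the rectangle `[0, b] × [0, a]` with `px ≤ qy` and with `qy ≤ px` respectively; only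
`(0, 0)` lies on both sides, so the two counts add up to `(a + 1)(b + 1) + 1`.
-/

open Finset

theorem Nat.card_subtype_eq_card_filter {α : Type*} {P Q : α → Prop} [DecidablePred Q]
    (s : Finset α) (h : ∀ x, P x ↔ x ∈ s ∧ Q x) :
    Nat.card {x // P x} = #(s.filter Q) := by
  rw [← Nat.card_eq_finsetCard]
  exact Nat.card_congr (Equiv.subtypeEquivRight fun x => by rw [mem_filter, h])

theorem Finset.card_filter_le_add_card_filter_le {α β : Type*} [DecidableEq α] [LinearOrder β]
    (s : Finset α) (f g : α → β) :
    #(s.filter fun x => f x ≤ g x) + #(s.filter fun x => g x ≤ f x)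
      = #s + #(s.filter fun x => f x = g x) := by
  rw [← card_union_add_card_inter, ← filter_or, ← filter_and,
    filter_true_of_mem fun x _ => le_total (f x) (g x)]
  simp only [← le_antisymm_iff]

theorem Nat.eq_and_eq_of_mul_add_mul_eq {p q x y x' y' : ℕ} (hco : p.Coprime q)
    (hx : x < q) (hx' : x' < q) (h : p * x + q * y = p * x' + q * y') : x = x' ∧ y = y' := by
  have hmod : p * x ≡ p * x' [MOD q] := by
    simpa only [Nat.ModEq, Nat.add_mul_mod_self_left] using congrArg (· % q) h
  have hxx' : x = x' := (hmod.cancel_left_of_coprime hco.symm).eq_of_lt_of_lt hx hx'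
  subst hxx'
  exact ⟨rfl, Nat.eq_of_mul_eq_mul_left (by omega : 0 < q) (by omega)⟩

theorem card_triples_eq_card_pairs_le (p q N : ℕ) :
    Nat.card {t : ℕ × ℕ × ℕ // p * t.1 + q * t.2.1 + t.2.2 = N}
      = Nat.card {s : ℕ × ℕ // p * s.1 + q * s.2 ≤ N} :=
  Nat.card_congr
    { toFun := fun t => ⟨(t.1.1, t.1.2.1), by have := t.2; dsimp only at this ⊢; omega⟩
      invFun := fun s => ⟨(s.1.1, s.1.2, N - (p * s.1.1 + q * s.1.2)), by
        have := s.2; dsimp only at this ⊢; omega⟩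
      left_inv := fun ⟨⟨x, y, z⟩, h⟩ => by
        dsimp only at h
        simp only [Subtype.mk.injEq, Prod.mk.injEq, true_and]
        omega
      right_inv := fun _ => rfl }

section Reflection

variable {p q a b : ℕ} (ha : p = 2 * a + 1) (hb : q = 2 * b + 1)
include ha hb

theorem card_box_filter_le_eq_card_box_filter_ge :
    #((range q ×ˢ range p).filter fun s => p * s.1 + q * s.2 ≤ p * b + q * a)
      = #((range q ×ˢ range p).filter fun s => p * b + q * a ≤ p * s.1 + q * s.2) := by
  have hsum : ∀ x y, x < q → y < p →
      (p * (2 * b - x) + q * (2 * a - y)) + (p * x + q * y) = 2 * (p * b + q * a) := by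
    intro x y hx hy
    rw [Nat.mul_sub, Nat.mul_sub]
    have : p * x ≤ p * (2 * b) := Nat.mul_le_mul_left p (by omega)
    have : q * y ≤ q * (2 * a) := Nat.mul_le_mul_left q (by omega)
    have : p * (2 * b) = 2 * (p * b) := by ring
    have : q * (2 * a) = 2 * (q * a) := by ring
    omega
  apply card_nbij' (fun s => (2 * b - s.1, 2 * a - s.2)) (fun s => (2 * b - s.1, 2 * a - s.2))
  all_goals
    rintro ⟨x, y⟩ hs
    simp only [coe_filter, mem_product, mem_range, Set.mem_ofPred_eq] at hs ⊢
    have := hsum x y hs.1.1 hs.1.2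
  · exact ⟨⟨by omega, by omega⟩, by omega⟩
  · exact ⟨⟨by omega, by omega⟩, by omega⟩
  · simp only [Prod.mk.injEq]; omega
  · simp only [Prod.mk.injEq]; omega

theorem two_mul_card_pairs_le_half (hco : p.Coprime q) :
    2 * Nat.card {s : ℕ × ℕ // p * s.1 + q * s.2 ≤ p * b + q * a} = p * q + 1 := by
  have hN : p * b + q * a < p * q := by subst ha hb; nlinarith
  have hbox : ∀ s : ℕ × ℕ, p * s.1 + q * s.2 ≤ p * b + q * a →
      s ∈ range q ×ˢ range p := by
    rintro ⟨x, y⟩ hs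
    dsimp only at hs
    simp only [mem_product, mem_range]
    exact ⟨Nat.lt_of_mul_lt_mul_left (a := p) (by omega),
      Nat.lt_of_mul_lt_mul_left (a := q) (by rw [mul_comm q p]; omega)⟩
  have hline : #((range q ×ˢ range p).filter fun s => p * s.1 + q * s.2 = p * b + q * a) = 1 := by
    rw [card_eq_one]
    refine ⟨(b, a), ext fun ⟨x, y⟩ => ?_⟩
    simp only [mem_filter, mem_product, mem_range, mem_singleton, Prod.mk.injEq]
    constructor
    · rintro ⟨⟨hx, -⟩, h⟩
      exact Nat.eq_and_eq_of_mul_add_mul_eq hco hx (by omega) h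
    · rintro ⟨rfl, rfl⟩
      exact ⟨⟨by omega, by omega⟩, rfl⟩
  have hsplit := card_filter_le_add_card_filter_le (range q ×ˢ range p)
    (fun s => p * s.1 + q * s.2) (fun _ => p * b + q * a)
  rw [← card_box_filter_le_eq_card_box_filter_ge ha hb, hline, card_product, card_range,
    card_range, mul_comm q p] at hsplit
  rw [Nat.card_subtype_eq_card_filter _ fun s => ⟨fun h => ⟨hbox s h, h⟩, And.right⟩]
  omega

end Reflection

theorem card_pairs_le_mul_right {p q a : ℕ} (hq : 0 < q) :
    Nat.card {s : ℕ × ℕ // p * s.1 + q * s.2 ≤ q * a}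
      = Nat.card {s : ℕ × ℕ // s.2 ≤ a ∧ p * s.1 ≤ q * s.2} :=
  have snd_le {x y : ℕ} (h : p * x + q * y ≤ q * a) : y ≤ a :=
    Nat.le_of_mul_le_mul_left (by omega : q * y ≤ q * a) hq
  Nat.card_congr
    { toFun := fun s => ⟨(s.1.1, a - s.1.2), by
        have h := s.2
        have := snd_le h
        dsimp only
        rw [Nat.mul_sub]
        omega⟩
      invFun := fun s => ⟨(s.1.1, a - s.1.2), by
        have h := s.2
        have : q * s.1.2 ≤ q * a := Nat.mul_le_mul_left q h.1
        dsimp only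
        rw [Nat.mul_sub]
        omega⟩
      left_inv := fun ⟨⟨x, y⟩, h⟩ => by
        have := snd_le h
        simp only [Subtype.mk.injEq, Prod.mk.injEq, true_and]
        omega
      right_inv := fun ⟨⟨x, u⟩, h⟩ => by
        simp only [Subtype.mk.injEq, Prod.mk.injEq, true_and]
        omega }

theorem card_pairs_le_mul_left {p q b : ℕ} (hp : 0 < p) :
    Nat.card {s : ℕ × ℕ // p * s.1 + q * s.2 ≤ p * b}
      = Nat.card {s : ℕ × ℕ // s.1 ≤ b ∧ q * s.2 ≤ p * s.1} := by
  have swap : ∀ {P : ℕ × ℕ → Prop}, Nat.card {s // P s} = Nat.card {s : ℕ × ℕ // P s.swap} :=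
    Nat.card_congr ((Equiv.prodComm ℕ ℕ).subtypeEquiv fun _ => Iff.rfl)
  rw [swap]
  simp only [Prod.fst_swap, Prod.snd_swap, add_comm (p * _)]
  rw [card_pairs_le_mul_right hp, swap]
  rfl

theorem card_pairs_le_snd_eq_card_filter {p q a b : ℕ} (hqa : q * a < p * (b + 1)) :
    Nat.card {s : ℕ × ℕ // s.2 ≤ a ∧ p * s.1 ≤ q * s.2}
      = #((range (b + 1) ×ˢ range (a + 1)).filter fun s => p * s.1 ≤ q * s.2) := by
  refine Nat.card_subtype_eq_card_filter _ fun ⟨x, u⟩ => ?_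
  simp only [mem_product, mem_range]
  constructor
  · rintro ⟨hu, h⟩
    have : q * u ≤ q * a := Nat.mul_le_mul_left q hu
    exact ⟨⟨Nat.lt_of_mul_lt_mul_left (a := p) (by omega), by omega⟩, h⟩
  · rintro ⟨⟨-, hu⟩, h⟩
    exact ⟨by omega, h⟩

theorem card_pairs_le_fst_eq_card_filter {p q a b : ℕ} (hpb : p * b < q * (a + 1)) :
    Nat.card {s : ℕ × ℕ // s.1 ≤ b ∧ q * s.2 ≤ p * s.1}
      = #((range (b + 1) ×ˢ range (a + 1)).filter fun s => q * s.2 ≤ p * s.1) := by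
  refine Nat.card_subtype_eq_card_filter _ fun ⟨x, u⟩ => ?_
  simp only [mem_product, mem_range]
  constructor
  · rintro ⟨hx, h⟩
    have : p * x ≤ p * b := Nat.mul_le_mul_left p hx
    exact ⟨⟨by omega, Nat.lt_of_mul_lt_mul_left (a := q) (by omega)⟩, h⟩
  · rintro ⟨⟨hx, -⟩, h⟩
    exact ⟨by omega, h⟩

theorem card_pairs_le_add_card_pairs_le {p q a b : ℕ} (ha : p = 2 * a + 1) (hb : q = 2 * b + 1)
    (hco : p.Coprime q) :
    Nat.card {s : ℕ × ℕ // p * s.1 + q * s.2 ≤ q * a}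
      + Nat.card {s : ℕ × ℕ // p * s.1 + q * s.2 ≤ p * b} = (a + 1) * (b + 1) + 1 := by
  have hqa : q * a < p * (b + 1) := by subst ha hb; nlinarith
  have hpb : p * b < q * (a + 1) := by subst ha hb; nlinarith
  rw [card_pairs_le_mul_right (by omega), card_pairs_le_mul_left (by omega),
    card_pairs_le_snd_eq_card_filter hqa, card_pairs_le_fst_eq_card_filter hpb,
    card_filter_le_add_card_filter_le, card_product, card_range, card_range, mul_comm (b + 1)]
  have hdiag : (range (b + 1) ×ˢ range (a + 1)).filter (fun s => p * s.1 = q * s.2)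
      = {(0, 0)} := by
    ext ⟨x, u⟩
    simp only [mem_filter, mem_product, mem_range, mem_singleton, Prod.mk.injEq]
    constructor
    · rintro ⟨⟨hx, -⟩, h⟩
      obtain ⟨hx0, hu0⟩ := Nat.eq_and_eq_of_mul_add_mul_eq (x' := 0) (y := 0) (y' := u) hco
        (by omega : x < q) (by omega) (by simpa using h)
      exact ⟨hx0, hu0.symm⟩
    · rintro ⟨rfl, rfl⟩
      simp
  rw [hdiag, card_singleton]

/-- The number of non-negative integer solutions of
`px + qy + z = p(q−1)/2 + q(p−1)/2` equals
`2(N_{p,q} + N_{q,p}) − ((p+1)/2 + (q+1)/2 + 1)`. -/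
theorem stmt_9 (p q : ℕ) (hp : p.Prime) (hq : q.Prime) (hp2 : Odd p) (hq2 : Odd q)
    (hpq : p ≠ q) :
    Nat.card {t : ℕ × ℕ × ℕ //
        p * t.1 + q * t.2.1 + t.2.2 = p * (q - 1) / 2 + q * (p - 1) / 2}
      = 2 * (Nat.card {t : ℕ × ℕ × ℕ // p * t.1 + q * t.2.1 + t.2.2 = q * (p - 1) / 2}
            + Nat.card {t : ℕ × ℕ × ℕ // p * t.1 + q * t.2.1 + t.2.2 = p * (q - 1) / 2})
        - ((p + 1) / 2 + (q + 1) / 2 + 1) := by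
  have hco : p.Coprime q := (Nat.coprime_primes hp hq).mpr hpq
  obtain ⟨a, ha⟩ := hp2
  obtain ⟨b, hb⟩ := hq2
  have hqa : q * (p - 1) / 2 = q * a := by
    rw [ha, Nat.add_sub_cancel, mul_left_comm, Nat.mul_div_cancel_left _ two_pos]
  have hpb : p * (q - 1) / 2 = p * b := by
    rw [hb, Nat.add_sub_cancel, mul_left_comm, Nat.mul_div_cancel_left _ two_pos]
  simp only [card_triples_eq_card_pairs_le, hqa, hpb]
  have hhalf := two_mul_card_pairs_le_half ha hb hco
  have hsides := card_pairs_le_add_card_pairs_le ha hb hco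
  have hpq_expand : p * q = 4 * (a * b) + 2 * a + 2 * b + 1 := by subst ha hb; ring
  have hab_expand : (a + 1) * (b + 1) = a * b + a + b + 1 := by ring
  omega
end

section
/- Let p and q be distinct odd primes with q < p. Then the number of triples (x,y,z) of non-negative integers satisfying px + qy + z = q(p−1)/2 is equal to (p+1)/2 + (p−1)(q−1)/4 − ∑_{i=1}^{(q−1)/2} ⌊ip/q⌋. -/
/-!
Writing `M = (p - 1) / 2`, for fixed `y ≤ M` the pairs `(x, z)` with `p x + z = q (M - y)` number
`⌊q (M - y) / p⌋ + 1`, so reversing the order of summation the count is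
`M + 1 + ∑_{i=1}^{M} ⌊i q / p⌋`. Eisenstein's lattice-point identity
`∑_{i=1}^{(p-1)/2} ⌊i q / p⌋ + ∑_{j=1}^{(q-1)/2} ⌊j p / q⌋ = (p - 1)(q - 1) / 4`
(count the lattice points of the rectangle on either side of its diagonal) finishes the proof.
-/

open Finset

def mulAddEqEquivFin (a K : ℕ) (ha : 0 < a) :
    {s : ℕ × ℕ // a * s.1 + s.2 = K} ≃ Fin (K / a + 1) where
  toFun s := ⟨s.1.1, by rw [Nat.lt_succ_iff, Nat.le_div_iff_mul_le ha]; have := s.2; grind⟩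
  invFun x := ⟨(x, K - a * x), by
    have hx := x.2
    rw [Nat.lt_succ_iff, Nat.le_div_iff_mul_le ha] at hx
    grind⟩
  left_inv s := by obtain ⟨⟨x, z⟩, h⟩ := s; ext <;> simp only at h ⊢; omega
  right_inv x := rfl

def solutionsEquivSigma (a b N : ℕ) (hb : 0 < b) :
    {t : ℕ × ℕ × ℕ // a * t.1 + b * t.2.1 + t.2.2 = N} ≃
      Σ y : Fin (N / b + 1), {s : ℕ × ℕ // a * s.1 + s.2 = N - b * y} where
  toFun t := ⟨⟨t.1.2.1, by
      rw [Nat.lt_succ_iff, Nat.le_div_iff_mul_le hb]; have := t.2; grind⟩,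
    ⟨(t.1.1, t.1.2.2), by have := t.2; simp only; omega⟩⟩
  invFun s := ⟨(s.2.1.1, s.1, s.2.1.2), by
      have hy := s.1.2
      rw [Nat.lt_succ_iff, Nat.le_div_iff_mul_le hb] at hy
      have := s.2.2; simp only at this ⊢; grind⟩
  left_inv t := by obtain ⟨⟨x, y, z⟩, h⟩ := t; rfl
  right_inv s := by obtain ⟨y, ⟨x, z⟩, h⟩ := s; rfl

theorem card_solutions_eq_sum (a b N : ℕ) (ha : 0 < a) (hb : 0 < b) :
    Nat.card {t : ℕ × ℕ × ℕ // a * t.1 + b * t.2.1 + t.2.2 = N} =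
      ∑ y ∈ range (N / b + 1), ((N - b * y) / a + 1) := by
  have (K : ℕ) : Finite {s : ℕ × ℕ // a * s.1 + s.2 = K} :=
    .of_equiv _ (mulAddEqEquivFin a K ha).symm
  rw [Nat.card_congr (solutionsEquivSigma a b N hb), Nat.card_sigma]
  simp only [Nat.card_congr (mulAddEqEquivFin a _ ha), Nat.card_eq_fintype_card, Fintype.card_fin]
  exact Fin.sum_univ_eq_sum_range (fun y => (N - b * y) / a + 1) _

theorem sum_range_sub_mul_div_eq_sum_Icc (a b M : ℕ) :
    ∑ y ∈ range (M + 1), (b * M - b * y) / a = ∑ i ∈ Icc 1 M, i * b / a := calc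
  _ = ∑ y ∈ range (M + 1), (M + 1 - 1 - y) * b / a := sum_congr rfl fun _ _ => by
    rw [← Nat.mul_sub, mul_comm, Nat.add_sub_cancel]
  _ = ∑ i ∈ range (M + 1), i * b / a := sum_range_reflect (fun i => i * b / a) _
  _ = ∑ i ∈ Icc 1 M, i * b / a := by
    rw [range_eq_Ico, sum_eq_sum_Ico_succ_bot M.succ_pos, zero_mul, Nat.zero_div, zero_add,
      Nat.succ_eq_add_one, Ico_add_one_right_eq_Icc]

theorem card_solutions_mul_eq (a b M : ℕ) (ha : 0 < a) (hb : 0 < b) :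
    Nat.card {t : ℕ × ℕ × ℕ // a * t.1 + b * t.2.1 + t.2.2 = b * M} =
      M + 1 + ∑ i ∈ Icc 1 M, i * b / a := by
  rw [card_solutions_eq_sum a b _ ha hb, Nat.mul_div_cancel_left _ hb, sum_add_distrib,
    sum_range_sub_mul_div_eq_sum_Icc, sum_const, card_range, smul_eq_mul, mul_one, add_comm]

theorem stmt_11_general (p q : ℕ) (hp : p.Prime) (hp2 : Odd p) (hq2 : Odd q)
    (hqp : q < p) :
    Nat.card {t : ℕ × ℕ × ℕ // p * t.1 + q * t.2.1 + t.2.2 = q * (p - 1) / 2}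
      = (p + 1) / 2 + (p - 1) * (q - 1) / 4
        - ∑ i ∈ Finset.Icc 1 ((q - 1) / 2), i * p / q := by
  rw [Nat.odd_iff] at hp2 hq2
  have : Fact p.Prime := ⟨hp⟩
  have hq0 : (q : ZMod p) ≠ 0 := by
    rw [Ne, ZMod.natCast_eq_zero_iff]
    exact fun h => by simp [Nat.eq_zero_of_dvd_of_lt h hqp] at hq2
  have hlattice : ∑ i ∈ Icc 1 (p / 2), i * q / p + ∑ j ∈ Icc 1 (q / 2), j * p / q
      = p / 2 * (q / 2) := by
    simpa only [Nat.succ_eq_add_one, Ico_add_one_right_eq_Icc] using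
      ZMod.sum_mul_div_add_sum_mul_div_eq_mul p q hq0
  have hp1 : p - 1 = 2 * (p / 2) := by omega
  have hq1 : q - 1 = 2 * (q / 2) := by omega
  have hM : q * (p - 1) / 2 = q * (p / 2) := by
    rw [hp1, mul_left_comm, Nat.mul_div_cancel_left _ two_pos]
  have hquarter : (p - 1) * (q - 1) / 4 = p / 2 * (q / 2) := by
    rw [hp1, hq1, mul_mul_mul_comm, Nat.mul_div_cancel_left _ (by norm_num : 0 < 2 * 2)]
  rw [hM, card_solutions_mul_eq p q _ hp.pos (by omega), hquarter,
    show (p + 1) / 2 = p / 2 + 1 by omega, show (q - 1) / 2 = q / 2 by omega]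
  omega

/-- For distinct odd primes `q < p`, the number of non-negative integer solutions of
`px + qy + z = q(p−1)/2` equals `(p+1)/2 + (p−1)(q−1)/4 − ∑_{i=1}^{(q−1)/2} ⌊ip/q⌋`. -/
theorem stmt_11 (p q : ℕ) (hp : p.Prime) (hq : q.Prime) (hp2 : Odd p) (hq2 : Odd q)
    (hqp : q < p) :
    Nat.card {t : ℕ × ℕ × ℕ // p * t.1 + q * t.2.1 + t.2.2 = q * (p - 1) / 2}
      = (p + 1) / 2 + (p - 1) * (q - 1) / 4
        - ∑ i ∈ Finset.Icc 1 ((q - 1) / 2), i * p / q :=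
  stmt_11_general p q hp hp2 hq2 hqp
end

section
/- Let a and b be coprime positive integers and n a positive integer. Let a1 be the integer with 0 ≤ a1 < b and a·a1 ≡ n (mod b), and let b1 be the integer with 0 ≤ b1 < a and b·b1 ≡ n (mod a). Then ab divides n − a·a1 − b·b1, and the number of pairs (x,y) of non-negative integers with ax + by = n equals 1 + (n − a·a1 − b·b1)/(ab), as an equality of integers. -/
/-!
Every solution of `a x + b y = n` has `x ≡ a1 (mod b)`, so the solutions correspond to the
`k ≥ 0` with `a (a1 + b k) ≤ n`, i.e. `ab k ≤ n - a a1`; there are `⌊(n - a a1)/(ab)⌋ + 1`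
of them, clamped at `0`. Since `n - a a1 = ab c + b b1` with `0 ≤ b b1 < ab`, that floor is `c`,
and `n - a a1 > -ab` gives `c ≥ -1`, so no clamping occurs.
-/

theorem Int.mul_dvd_sub_sub_of_modEq {a b n x y : ℤ} (hab : IsCoprime a b)
    (hx : a * x ≡ n [ZMOD b]) (hy : b * y ≡ n [ZMOD a]) : a * b ∣ n - a * x - b * y := by
  refine hab.mul_dvd ?_ ?_
  · simpa [sub_right_comm] using hy.dvd.sub (dvd_mul_right a x)
  · simpa using hx.dvd.sub (dvd_mul_right b y)

theorem Nat.card_add_mul_le {d : ℕ} (hd : 0 < d) (r n : ℕ) :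
    Nat.card {k : ℕ // r + d * k ≤ n} = (((n : ℤ) - r) / d + 1).toNat := by
  have key (k : ℕ) : r + d * k ≤ n ↔ k < (((n : ℤ) - r) / d + 1).toNat := by
    rw [Int.lt_toNat, Int.lt_add_one_iff, Int.le_ediv_iff_mul_le (by positivity)]
    constructor <;> intro h <;> linarith
  rw [Nat.card_congr (Equiv.subtypeEquivRight key), Nat.card_congr Fin.equivSubtype.symm,
    Nat.card_eq_fintype_card, Fintype.card_fin]

theorem Int.ediv_eq_ediv_sub_of_dvd {d m r : ℤ} (hr : 0 ≤ r) (hrd : r < d)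
    (hdvd : d ∣ m - r) :
    m / d = (m - r) / d := by
  obtain ⟨c, hc⟩ := hdvd
  have hd : d ≠ 0 := by omega
  rw [show m = r + d * c by linarith, add_sub_cancel_left, Int.add_mul_ediv_left _ _ hd,
    Int.ediv_eq_zero_of_lt hr hrd, Int.mul_ediv_cancel_left _ hd, zero_add]

section

variable {a b n a1 : ℕ}

theorem Nat.mod_eq_of_mul_add_mul_eq (hab : Nat.Coprime a b) (ha1 : a1 < b)
    (hcong : a * a1 ≡ n [MOD b]) {x y : ℕ} (hxy : a * x + b * y = n) : x % b = a1 := by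
  have hx : a * x ≡ a * a1 [MOD b] :=
    calc a * x ≡ a * x + b * y [MOD b] := by simp [Nat.ModEq]
      _ = n := hxy
      _ ≡ a * a1 [MOD b] := hcong.symm
  exact Eq.trans (Nat.ModEq.cancel_left_of_coprime hab.symm hx) (Nat.mod_eq_of_lt ha1)

theorem Nat.dvd_sub_mul_add_mul (hcong : a * a1 ≡ n [MOD b]) {k : ℕ}
    (hk : a * a1 + a * b * k ≤ n) :
    b ∣ n - a * (a1 + b * k) := by
  have h := (Nat.modEq_iff_dvd' (by omega)).mp hcong
  rw [mul_add, mul_left_comm, ← Nat.sub_sub]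
  exact Nat.dvd_sub h (dvd_mul_right b _)

def Nat.linearSolutionsEquiv (hab : Nat.Coprime a b) (ha1 : a1 < b) (hcong : a * a1 ≡ n [MOD b]) :
    {t : ℕ × ℕ // a * t.1 + b * t.2 = n} ≃ {k : ℕ // a * a1 + a * b * k ≤ n} where
  toFun t := ⟨t.1.1 / b, by
    have h := Nat.mod_add_div t.1.1 b
    rw [Nat.mod_eq_of_mul_add_mul_eq hab ha1 hcong t.2] at h
    have := t.2
    nlinarith⟩
  invFun k := ⟨(a1 + b * k, (n - a * (a1 + b * k)) / b), by
    dsimp only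
    rw [Nat.mul_div_cancel' (Nat.dvd_sub_mul_add_mul hcong k.2)]
    have := k.2
    rw [mul_add, ← mul_assoc]
    omega⟩
  left_inv t := by
    obtain ⟨⟨x, y⟩, hxy : a * x + b * y = n⟩ := t
    have hx : a1 + b * (x / b) = x := by
      rw [← Nat.mod_eq_of_mul_add_mul_eq hab ha1 hcong hxy, Nat.mod_add_div]
    ext <;> dsimp only
    · exact hx
    · rw [hx, show n - a * x = b * y by omega, Nat.mul_div_cancel_left _ (by omega)]
  right_inv k := by
    ext
    dsimp only
    rw [Nat.add_mul_div_left _ _ (by omega), Nat.div_eq_of_lt ha1, zero_add]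

end

theorem stmt_12_general (a b n : ℕ)
    (hab : Nat.gcd a b = 1)
    (a1 b1 : ℕ) (ha1 : a1 < b) (hb1 : b1 < a)
    (hcong1 : a * a1 ≡ n [MOD b]) (hcong2 : b * b1 ≡ n [MOD a]) :
    ((a * b : ℤ) ∣ ((n : ℤ) - a * a1 - b * b1)) ∧
      (Nat.card {t : ℕ × ℕ // a * t.1 + b * t.2 = n} : ℤ)
        = 1 + ((n : ℤ) - a * a1 - b * b1) / (a * b) := by
  have hdvd : (a * b : ℤ) ∣ (n : ℤ) - a * a1 - b * b1 := by
    refine Int.mul_dvd_sub_sub_of_modEq (Nat.isCoprime_iff_coprime.mpr hab) ?_ ?_ <;>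
      exact_mod_cast Int.natCast_modEq_iff.mpr ‹_›
  refine ⟨hdvd, ?_⟩
  have ha : 0 < a := by omega
  have hb : 0 < b := by omega
  have hab_pos : (0 : ℤ) < a * b := by positivity
  have haa1 : (a * a1 : ℤ) < a * b := by gcongr
  have hbb1 : (b * b1 : ℤ) < a * b := by rw [mul_comm (a : ℤ)]; gcongr
  have hquot_ge : -1 ≤ ((n : ℤ) - a * a1) / (a * b) := by
    rw [Int.le_ediv_iff_mul_le hab_pos]
    linarith
  rw [Nat.card_congr (Nat.linearSolutionsEquiv hab ha1 hcong1),
    Nat.card_add_mul_le (Nat.mul_pos ha hb)]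
  push_cast
  rw [Int.toNat_of_nonneg (by omega), Int.ediv_eq_ediv_sub_of_dvd (by positivity) hbb1 hdvd,
    add_comm]

/-- For coprime positive integers `a, b` and positive `n`: `ab ∣ n − a·a1 − b·b1`,
and the number of non-negative solutions of `ax + by = n` is
`1 + (n − a·a1 − b·b1)/(ab)`. -/
theorem stmt_12 (a b n : ℕ) (ha : 0 < a) (hb : 0 < b) (hn : 0 < n)
    (hab : Nat.gcd a b = 1)
    (a1 b1 : ℕ) (ha1 : a1 < b) (hb1 : b1 < a)
    (hcong1 : a * a1 ≡ n [MOD b]) (hcong2 : b * b1 ≡ n [MOD a]) :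
    ((a * b : ℤ) ∣ ((n : ℤ) - a * a1 - b * b1)) ∧
      (Nat.card {t : ℕ × ℕ // a * t.1 + b * t.2 = n} : ℤ)
        = 1 + ((n : ℤ) - a * a1 - b * b1) / (a * b) :=
  stmt_12_general a b n hab a1 b1 ha1 hb1 hcong1 hcong2
end

section
/- Let a and b be coprime positive integers and n a positive integer with (a−1)(b−1) ≤ n < ab. Then the equation ax + by = n has exactly one solution in non-negative integers (x,y). -/
theorem Nat.eq_and_eq_of_mul_add_mul_eq_of_lt_mul {a b x y x' y' : ℕ} (hab : a.Coprime b)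
    (h : a * x + b * y = a * x' + b * y') (hlt : a * x + b * y < a * b) : x = x' ∧ y = y' := by
  have hx : x < b := Nat.lt_of_mul_lt_mul_left (by omega : a * x < a * b)
  have hx' : x' < b := Nat.lt_of_mul_lt_mul_left (by omega : a * x' < a * b)
  have hmod : a * x ≡ a * x' [MOD b] := by
    simpa [Nat.ModEq, Nat.add_mul_mod_self_left] using congrArg (· % b) h
  have hxx' : x = x' := (hmod.cancel_left_of_coprime hab.symm).eq_of_lt_of_lt hx hx'
  subst hxx'
  exact ⟨rfl, Nat.eq_of_mul_eq_mul_left (by omega : 0 < b) (by omega)⟩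

theorem stmt_13_general (a b n : ℕ)
    (hab : Nat.gcd a b = 1) (h1 : (a - 1) * (b - 1) ≤ n) (h2 : n < a * b) :
    ∃! t : ℕ × ℕ, a * t.1 + b * t.2 = n := by
  obtain ⟨x, y, hxy⟩ := Nat.exists_add_mul_eq_of_gcd_dvd_of_mul_pred_le a b n
    (by rw [hab]; exact one_dvd n) (by simpa only [Nat.pred_eq_sub_one] using h1)
  refine ⟨(x, y), by dsimp only; linarith, ?_⟩
  rintro ⟨x', y'⟩ hxy'
  dsimp only at hxy'
  obtain ⟨rfl, rfl⟩ := Nat.eq_and_eq_of_mul_add_mul_eq_of_lt_mul hab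
    (show a * x' + b * y' = a * x + b * y by linarith) (hxy' ▸ h2)
  rfl

/-- If `(a−1)(b−1) ≤ n < ab` with `a, b` coprime, then `ax + by = n` has exactly one
solution in non-negative integers. -/
theorem stmt_13 (a b n : ℕ) (ha : 0 < a) (hb : 0 < b) (hn : 0 < n)
    (hab : Nat.gcd a b = 1) (h1 : (a - 1) * (b - 1) ≤ n) (h2 : n < a * b) :
    ∃! t : ℕ × ℕ, a * t.1 + b * t.2 = n :=
  stmt_13_general a b n hab h1 h2
end

section
/- Let p and q be distinct odd primes with p < q, and let M = ⌊(q−p)/(2p)⌋. Then ∑_{i=(q−1)/2 − M}^{(q−1)/2} ⌊ip/q⌋ = ((p−1)/2)·(M + 1). -/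
/-! Write `p = 2a + 1` and `q = 2k + 1`. For `i ≤ k` we always have `i p < (a + 1) q`, and
`a q ≤ i p` as soon as `p (k - i) ≤ k - a = (q - p) / 2`. Hence `⌊i p / q⌋ = (p - 1) / 2` for
every `i` in the window `k - M ≤ i ≤ k`, which has `M + 1` elements. -/

theorem Nat.mul_div_eq_half_of_two_mul_le {p q i j : ℕ} (hp : Odd p) (hq : Odd q) (hpq : p ≤ q)
    (hij : i + j = (q - 1) / 2) (hj : 2 * p * j ≤ q - p) :
    i * p / q = (p - 1) / 2 := by
  obtain ⟨a, rfl⟩ := hp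
  obtain ⟨k, rfl⟩ := hq
  obtain rfl : k = i + j := by omega
  have hj' : (2 * a + 1) * j + a ≤ i + j := by rw [Nat.mul_assoc] at hj; omega
  rw [show (2 * a + 1 - 1) / 2 = a by omega]
  apply Nat.div_eq_of_lt_le <;> nlinarith

theorem stmt_15_general (p q M : ℕ) (hp2 : Odd p) (hq2 : Odd q)
    (hpq : p < q) (hM : M = (q - p) / (2 * p)) :
    ∑ i ∈ Finset.Icc ((q - 1) / 2 - M) ((q - 1) / 2), i * p / q
      = (p - 1) / 2 * (M + 1) := by
  have hMp : 2 * p * M ≤ q - p := by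
    rw [hM, Nat.mul_comm]
    exact Nat.div_mul_le_self _ _
  clear hM
  have hMq : M ≤ (q - 1) / 2 := by
    have : M ≤ p * M := Nat.le_mul_of_pos_left M hp2.pos
    have : 1 ≤ p := hp2.pos
    rw [Nat.mul_assoc] at hMp
    omega
  have hconst : ∀ i ∈ Finset.Icc ((q - 1) / 2 - M) ((q - 1) / 2), i * p / q = (p - 1) / 2 := by
    intro i hi
    rw [Finset.mem_Icc] at hi
    exact Nat.mul_div_eq_half_of_two_mul_le hp2 hq2 hpq.le (Nat.add_sub_of_le hi.2)
      (le_trans (Nat.mul_le_mul_left _ (by omega)) hMp)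
  rw [Finset.sum_congr rfl hconst, Finset.sum_const, Nat.card_Icc, smul_eq_mul, Nat.mul_comm]
  congr 1
  omega

/-- For distinct odd primes `p < q` with `M = ⌊(q−p)/(2p)⌋`:
`∑_{i=(q−1)/2 − M}^{(q−1)/2} ⌊ip/q⌋ = ((p−1)/2)(M+1)`. -/
theorem stmt_15 (p q M : ℕ) (hp : p.Prime) (hq : q.Prime) (hp2 : Odd p) (hq2 : Odd q)
    (hpq : p < q) (hM : M = (q - p) / (2 * p)) :
    ∑ i ∈ Finset.Icc ((q - 1) / 2 - M) ((q - 1) / 2), i * p / q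
      = (p - 1) / 2 * (M + 1) :=
  stmt_15_general p q M hp2 hq2 hpq hM
end

section
/- Let a, b, c, n be positive integers with gcd(a,b) = gcd(a,c) = 1, and write ζ_a = exp(2πi/a). Let b'1 and c'1 be the integers with 1 ≤ b'1 ≤ a, 1 ≤ c'1 ≤ a, b·b'1 ≡ −n (mod a), and c·c'1 ≡ b (mod a). Then (1/a)·∑_{k=1}^{a−1} (1 − ζ_a^{−nk})/((1 − ζ_a^{bk})(1 − ζ_a^{ck})) = c'1·b'1·(b'1 − 1)/(2a) − ∑_{j=1}^{b'1−1} ⌊j·c'1/a⌋ + 1 − b'1·(a+1)/(2a), as an equality of complex numbers. -/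
/-!
For `a ∤ k` put `x = ζ^(bk)` and `y = ζ^(ck)`. Since `b b'₁ ≡ -n`, the numerator is `1 - x^b'₁`, so
the summand is `(∑_{j < b'₁} x^j) / (1 - y)`, and `1 / (1 - y) = -(1/a) ∑_{t < a} t y^t` because `y`
is an `a`-th root of unity. Summing over `k` by orthogonality keeps, for each `j`, only the
`t < a` with `bj + ct ≡ 0 (mod a)`; as `b ≡ c c'₁` this is `t ≡ -j c'₁`. For `0 < j < b'₁ ≤ a` that
`t` equals `a (⌊j c'₁ / a⌋ + 1) - j c'₁`, and summing over `j` gives the floor sum.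
-/

open Finset

theorem Finset.sum_range_eq_add_sum_Icc {M : Type*} [AddCommMonoid M] {n : ℕ} (hn : 0 < n)
    (f : ℕ → M) : ∑ i ∈ range n, f i = f 0 + ∑ i ∈ Icc 1 (n - 1), f i := by
  have : range n = insert 0 (Icc 1 (n - 1)) := by ext i; simp; omega
  rw [this, sum_insert (by simp)]

namespace ZMod

theorem natCast_ne_zero_of_pos_of_lt {a j : ℕ} (hj : 0 < j) (hja : j < a) : (j : ZMod a) ≠ 0 := by
  rw [Ne, natCast_eq_zero_iff]
  exact Nat.not_dvd_of_pos_of_lt hj hja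

theorem sum_range_ite_natCast_eq {R : Type*} [AddCommMonoidWithOne R] {a : ℕ} [NeZero a]
    (s : ZMod a) : ∑ t ∈ range a, (if (t : ZMod a) = s then (t : R) else 0) = s.val := by
  rw [sum_eq_single s.val]
  · simp
  · intro t ht hts
    rw [if_neg]
    rintro rfl
    exact hts (val_cast_of_lt (mem_range.1 ht)).symm
  · simp [val_lt]

theorem val_neg_natCast_add_self {a : ℕ} [NeZero a] {x : ℕ} (hx : (x : ZMod a) ≠ 0) :
    (-(x : ZMod a)).val + x = a * (x / a + 1) := by
  have hlt := Nat.mod_lt x (NeZero.pos a)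
  have hdiv := Nat.mod_add_div x a
  rw [neg_val, if_neg hx, val_natCast, mul_add, mul_one]
  generalize a * (x / a) = q at hdiv
  omega

theorem sum_range_val_neg_mul_add {a b' c' : ℕ} [NeZero a] (hc' : IsUnit (c' : ZMod a))
    (hb' : 0 < b') (hb'a : b' ≤ a) :
    ∑ j ∈ range b', (-((j : ZMod a) * c')).val + (∑ j ∈ range b', j) * c' =
      a * (∑ j ∈ Icc 1 (b' - 1), j * c' / a + (b' - 1)) := by
  have hsplit : ∑ j ∈ Icc 1 (b' - 1), (j * c' / a + 1) =
      ∑ j ∈ Icc 1 (b' - 1), j * c' / a + (b' - 1) := by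
    simp [sum_add_distrib]
  rw [sum_mul, ← sum_add_distrib, sum_range_eq_add_sum_Icc hb', ← hsplit, mul_sum]
  simp only [Nat.cast_zero, zero_mul, neg_zero, val_zero, add_zero, zero_add]
  refine sum_congr rfl fun j hj => ?_
  rw [← Nat.cast_mul]
  refine val_neg_natCast_add_self ?_
  rw [mem_Icc] at hj
  rw [Nat.cast_mul, Ne, hc'.mul_left_eq_zero]
  exact natCast_ne_zero_of_pos_of_lt hj.1 (by omega)

end ZMod

theorem sub_one_mul_sum_range_mul_pow {R : Type*} [CommRing R] (x : R) (m : ℕ) :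
    (x - 1) * ∑ t ∈ range m, (t : R) * x ^ t = m * x ^ m - ∑ t ∈ range (m + 1), x ^ t + 1 := by
  induction m with
  | zero => simp
  | succ m ih =>
    rw [sum_range_succ, mul_add, ih, sum_range_succ _ (m + 1)]
    push_cast
    ring

theorem sub_one_mul_sum_range_mul_pow_of_pow_eq_one {K : Type*} [Field K] {y : K} {a : ℕ}
    (hy : y ≠ 1) (hya : y ^ a = 1) : (y - 1) * ∑ t ∈ range a, (t : K) * y ^ t = a := by
  rw [sub_one_mul_sum_range_mul_pow, sum_range_succ, geom_sum_eq hy, hya]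
  simp

/-- The key expansion is `1 / (1 - y) = -(1/a) ∑_{t < a} t y^t` for an `a`-th root of unity
`y ≠ 1`. -/
theorem one_sub_pow_div_mul_one_sub {K : Type*} [Field K] {x y : K} {a : ℕ} (m : ℕ)
    (hx : x ≠ 1) (hy : y ≠ 1) (hya : y ^ a = 1) (ha : (a : K) ≠ 0) :
    (1 - x ^ m) / ((1 - x) * (1 - y)) =
      -(1 / a) * ∑ j ∈ range m, ∑ t ∈ range a, (t : K) * (x ^ j * y ^ t) := by
  have hx' : x - 1 ≠ 0 := sub_ne_zero.2 hx
  have hy' : y - 1 ≠ 0 := sub_ne_zero.2 hy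
  have hweighted : ∑ t ∈ range a, (t : K) * y ^ t = a / (y - 1) :=
    eq_div_of_mul_eq hy' (by rw [mul_comm, sub_one_mul_sum_range_mul_pow_of_pow_eq_one hy hya])
  simp_rw [mul_left_comm _ (x ^ _), ← mul_sum, ← sum_mul, geom_sum_eq hx, hweighted]
  field_simp
  ring

namespace IsPrimitiveRoot

variable {K : Type*} [Field K] {ζ : K} {a : ℕ}

theorem zpow_eq_zpow_of_modEq (hζ : IsPrimitiveRoot ζ a) (ha : a ≠ 0) {m n : ℤ}
    (h : m ≡ n [ZMOD a]) : ζ ^ m = ζ ^ n := by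
  have h1 : ζ ^ (m - n) = 1 := (hζ.zpow_eq_one_iff_dvd _).2 h.symm.dvd
  rwa [zpow_sub₀ (hζ.ne_zero ha), div_eq_one_iff_eq (zpow_ne_zero _ (hζ.ne_zero ha))] at h1

theorem pow_mul_ne_one (hζ : IsPrimitiveRoot ζ a) {b k : ℕ} (hb : IsUnit (b : ZMod a))
    (hk : (k : ZMod a) ≠ 0) : ζ ^ (b * k) ≠ 1 := by
  rwa [Ne, hζ.pow_eq_one_iff_dvd, ← ZMod.natCast_eq_zero_iff, Nat.cast_mul, hb.mul_right_eq_zero]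

theorem sum_Icc_pow_mul (hζ : IsPrimitiveRoot ζ a) (ha : 0 < a) (m : ℕ) :
    ∑ k ∈ Icc 1 (a - 1), ζ ^ (m * k) = if (m : ZMod a) = 0 then (a : K) - 1 else -1 := by
  have hrange : ∑ k ∈ range a, (ζ ^ m) ^ k = if (m : ZMod a) = 0 then (a : K) else 0 := by
    have hiff : (m : ZMod a) = 0 ↔ ζ ^ m = 1 := by
      rw [ZMod.natCast_eq_zero_iff, hζ.pow_eq_one_iff_dvd]
    by_cases h : ζ ^ m = 1
    · simp [h, hiff.2 h]
    · rw [if_neg (hiff.not.2 h), geom_sum_eq h, ← pow_mul, mul_comm, pow_mul, hζ.pow_eq_one,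
        one_pow, sub_self, zero_div]
  simp_rw [pow_mul] at hrange ⊢
  rw [sum_range_eq_add_sum_Icc ha, pow_zero] at hrange
  split_ifs at hrange ⊢ <;> linear_combination hrange

theorem sum_range_mul_sum_Icc_pow (hζ : IsPrimitiveRoot ζ a) (ha : 0 < a) {c u : ℕ}
    {s : ZMod a} (hc : IsUnit (c : ZMod a)) (hs : (u : ZMod a) = c * s) :
    ∑ t ∈ range a, (t : K) * ∑ k ∈ Icc 1 (a - 1), ζ ^ ((u + c * t) * k) =
      a * (-s).val - ∑ t ∈ range a, (t : K) := by
  have := NeZero.of_pos ha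
  have hiff : ∀ t : ℕ, ((u + c * t : ℕ) : ZMod a) = 0 ↔ (t : ZMod a) = -s := fun t => by
    push_cast
    rw [hs, ← mul_add, hc.mul_right_eq_zero, eq_neg_iff_add_eq_zero, add_comm]
  have hterm : ∀ t : ℕ, (t : K) * ∑ k ∈ Icc 1 (a - 1), ζ ^ ((u + c * t) * k) =
      a * (if (t : ZMod a) = -s then (t : K) else 0) - t := fun t => by
    rw [hζ.sum_Icc_pow_mul ha]
    by_cases h : (t : ZMod a) = -s
    · rw [if_pos ((hiff t).2 h), if_pos h]
      ring
    · rw [if_neg ((hiff t).not.2 h), if_neg h]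
      ring
  simp_rw [hterm, sum_sub_distrib, ← mul_sum, ZMod.sum_range_ite_natCast_eq]

theorem one_sub_zpow_div_eq_sum (hζ : IsPrimitiveRoot ζ a) (ha : (a : K) ≠ 0) {b c m : ℕ}
    {n : ℤ} (hb : IsUnit (b : ZMod a)) (hc : IsUnit (c : ZMod a)) (hbm : b * m ≡ -n [ZMOD a])
    {k : ℕ} (hk : (k : ZMod a) ≠ 0) :
    (1 - ζ ^ (-(n * k))) / ((1 - ζ ^ ((b : ℤ) * k)) * (1 - ζ ^ ((c : ℤ) * k))) =
      -(1 / a) * ∑ j ∈ range m, ∑ t ∈ range a, (t : K) * ζ ^ ((b * j + c * t) * k) := by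
  have ha' : a ≠ 0 := by rintro rfl; exact ha Nat.cast_zero
  have hnum : ζ ^ (-(n * k)) = (ζ ^ (b * k)) ^ m := by
    rw [← pow_mul, ← zpow_natCast]
    refine hζ.zpow_eq_zpow_of_modEq ha' ?_
    push_cast
    convert (hbm.mul_right (k : ℤ)).symm using 1 <;> ring
  have hcast : ∀ e : ℕ, ζ ^ ((e : ℤ) * k) = ζ ^ (e * k) := fun e => by
    rw [← zpow_natCast]
    push_cast
    rfl
  have hroot : (ζ ^ (c * k)) ^ a = 1 := by
    rw [← pow_mul, mul_comm, pow_mul, hζ.pow_eq_one, one_pow]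
  rw [hnum, hcast, hcast, one_sub_pow_div_mul_one_sub m (hζ.pow_mul_ne_one hb hk)
    (hζ.pow_mul_ne_one hc hk) hroot ha]
  congr 1
  refine sum_congr rfl fun j _ => sum_congr rfl fun t _ => ?_
  rw [← pow_mul, ← pow_mul, ← pow_add]
  ring_nf

theorem sum_Icc_sum_range_sum_range_mul_pow (hζ : IsPrimitiveRoot ζ a) (ha : 0 < a)
    {b c c' : ℕ} (hc : IsUnit (c : ZMod a)) (hb : (b : ZMod a) = c * c') (m : ℕ) :
    ∑ k ∈ Icc 1 (a - 1), ∑ j ∈ range m, ∑ t ∈ range a, (t : K) * ζ ^ ((b * j + c * t) * k) =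
      ∑ j ∈ range m, ((a : K) * (-((j : ZMod a) * c')).val - ∑ t ∈ range a, (t : K)) := by
  rw [sum_comm]
  refine sum_congr rfl fun j _ => ?_
  rw [sum_comm]
  simp_rw [← mul_sum]
  exact hζ.sum_range_mul_sum_Icc_pow ha hc (by push_cast; rw [hb]; ring)

end IsPrimitiveRoot

theorem stmt_18_general (a b c n : ℕ) (ha : 0 < a)
    (hab : Nat.gcd a b = 1) (hac : Nat.gcd a c = 1)
    (b'1 c'1 : ℕ)
    (hb'1 : 1 ≤ b'1 ∧ b'1 ≤ a)
    (hcong1 : (b : ℤ) * b'1 ≡ -(n : ℤ) [ZMOD (a : ℤ)])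
    (hcong2 : (c : ℤ) * c'1 ≡ (b : ℤ) [ZMOD (a : ℤ)]) :
    (1 / (a : ℂ)) * ∑ k ∈ Finset.Icc 1 (a - 1),
        (1 - Complex.exp (2 * Real.pi * Complex.I / a) ^ (-((n : ℤ) * k))) /
          ((1 - Complex.exp (2 * Real.pi * Complex.I / a) ^ ((b : ℤ) * k)) *
           (1 - Complex.exp (2 * Real.pi * Complex.I / a) ^ ((c : ℤ) * k)))
      = (c'1 : ℂ) * b'1 * ((b'1 : ℂ) - 1) / (2 * a)
        - ∑ j ∈ Finset.Icc 1 (b'1 - 1), ((j * c'1 / a : ℕ) : ℂ)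
        + 1 - (b'1 : ℂ) * ((a : ℂ) + 1) / (2 * a) := by
  have := NeZero.of_pos ha
  have ha0 : (a : ℂ) ≠ 0 := by exact_mod_cast ha.ne'
  have hζ := Complex.isPrimitiveRoot_exp a ha.ne'
  have hbU : IsUnit (b : ZMod a) := (ZMod.isUnit_iff_coprime b a).2 (Nat.coprime_comm.1 hab)
  have hcU : IsUnit (c : ZMod a) := (ZMod.isUnit_iff_coprime c a).2 (Nat.coprime_comm.1 hac)
  have hcc' : (b : ZMod a) = c * c'1 := by
    simpa using ((ZMod.intCast_eq_intCast_iff _ _ _).2 hcong2).symm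
  have hc'U : IsUnit (c'1 : ZMod a) := isUnit_of_mul_isUnit_right (hcc' ▸ hbU)
  rw [sum_congr rfl fun k hk => hζ.one_sub_zpow_div_eq_sum ha0 hbU hcU hcong1
      (ZMod.natCast_ne_zero_of_pos_of_lt (mem_Icc.1 hk).1 (Nat.lt_of_le_sub_one ha (mem_Icc.1 hk).2)),
    ← mul_sum, hζ.sum_Icc_sum_range_sum_range_mul_pow ha hcU hcc', sum_sub_distrib, sum_const,
    card_range, nsmul_eq_mul, ← mul_sum]
  have hfloor := congrArg (Nat.cast : ℕ → ℂ) (ZMod.sum_range_val_neg_mul_add hc'U hb'1.1 hb'1.2)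
  have ht := congrArg (Nat.cast : ℕ → ℂ) (sum_range_id_mul_two a)
  have hj := congrArg (Nat.cast : ℕ → ℂ) (sum_range_id_mul_two b'1)
  push_cast [Nat.cast_sub ha, Nat.cast_sub hb'1.1] at hfloor ht hj
  have hT : ∑ t ∈ range a, (t : ℂ) = a * (a - 1) / 2 := by linear_combination ht / 2
  have hV : ∑ j ∈ range b'1, ((-((j : ZMod a) * c'1)).val : ℂ) =
      a * (∑ j ∈ Icc 1 (b'1 - 1), ((j * c'1 / a : ℕ) : ℂ) + (b'1 - 1)) -
        b'1 * (b'1 - 1) / 2 * c'1 := by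
    linear_combination hfloor - (c'1 : ℂ) / 2 * hj
  rw [hT, hV]
  field_simp
  ring

/-- Closed form for the root-of-unity sum `S1/a` in terms of floor sums:
`(1/a)·∑_{k=1}^{a−1} (1 − ζ_a^{−nk})/((1 − ζ_a^{bk})(1 − ζ_a^{ck}))
  = c'1·b'1·(b'1−1)/(2a) − ∑_{j=1}^{b'1−1} ⌊j·c'1/a⌋ + 1 − b'1·(a+1)/(2a)`. -/
theorem stmt_18 (a b c n : ℕ) (ha : 0 < a) (hb : 0 < b) (hc : 0 < c) (hn : 0 < n)
    (hab : Nat.gcd a b = 1) (hac : Nat.gcd a c = 1)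
    (b'1 c'1 : ℕ)
    (hb'1 : 1 ≤ b'1 ∧ b'1 ≤ a) (hc'1 : 1 ≤ c'1 ∧ c'1 ≤ a)
    (hcong1 : (b : ℤ) * b'1 ≡ -(n : ℤ) [ZMOD (a : ℤ)])
    (hcong2 : (c : ℤ) * c'1 ≡ (b : ℤ) [ZMOD (a : ℤ)]) :
    (1 / (a : ℂ)) * ∑ k ∈ Finset.Icc 1 (a - 1),
        (1 - Complex.exp (2 * Real.pi * Complex.I / a) ^ (-((n : ℤ) * k))) /
          ((1 - Complex.exp (2 * Real.pi * Complex.I / a) ^ ((b : ℤ) * k)) *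
           (1 - Complex.exp (2 * Real.pi * Complex.I / a) ^ ((c : ℤ) * k)))
      = (c'1 : ℂ) * b'1 * ((b'1 : ℂ) - 1) / (2 * a)
        - ∑ j ∈ Finset.Icc 1 (b'1 - 1), ((j * c'1 / a : ℕ) : ℂ)
        + 1 - (b'1 : ℂ) * ((a : ℂ) + 1) / (2 * a) :=
  stmt_18_general a b c n ha hab hac b'1 c'1 hb'1 hcong1 hcong2
end
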